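/- arXiv:2312.13427 — 2 statements merged into one kernel-verified Lean document; each statement's English description precedes it below -/
import Mathlib

section
/- Let S be a finite list of finite sets (schemas) sorted in non-increasing order of cardinality. Process the sets in order, maintaining a list of 'centers': if the current set is a subset of some existing center, add it as a member to every cluster whose center contains it; otherwise make it a new center (and a member of its own cluster). Then add a directed edge from x to y whenever x and y are members of a common cluster and y ⊆ x. Theorem: for every pair of sets A, B in S with A ⊆ B, the resulting graph contains the edge B → A; i.e., no containment edge is missed. -/
/-!
A step of SGB only adds members to clusters and never changes a center, and every schema
ends up a member of a cluster whose center contains it. So once `B` has been processed it sits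
in a cluster with center `C ⊇ B`, and every later schema `A ⊆ B ⊆ C` joins that cluster.
Because the list is sorted by non-increasing size, a proper subset `A` of `B` can only come
after `B`.
-/

variable {α : Type*} [DecidableEq α]

/-- One step of the SGB algorithm: process schema set `s` against the current list of
clusters (each cluster is a pair `(center, members)`).  If `s` is contained in some
existing center, add it as a member of every cluster whose center contains it;
otherwise make it a new center (and a member of its own cluster). -/
def sgbStep (clusters : List (Finset α × List (Finset α))) (s : Finset α) :
    List (Finset α × List (Finset α)) :=
  if clusters.any (fun c => decide (s ⊆ c.1)) then
    clusters.map (fun c => if s ⊆ c.1 then (c.1, s :: c.2) else c)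
  else
    clusters ++ [(s, [s])]

/-- The clusters produced by SGB after processing the list `S` in order. -/
def sgbClusters (S : List (Finset α)) : List (Finset α × List (Finset α)) :=
  S.foldl sgbStep []

/-- The schema containment graph built by SGB: there is a directed edge from `x` to `y`
iff `x` and `y` are members of a common cluster and `y ⊆ x`. -/
def sgbEdge (S : List (Finset α)) (x y : Finset α) : Prop :=
  ∃ c ∈ sgbClusters S, x ∈ c.2 ∧ y ∈ c.2 ∧ y ⊆ x

lemma List.mem_cons_of_subset_of_pairwise_card_ge {β : Type*} {l₁ l₂ : List (Finset β)}
    {A B : Finset β} (hsorted : (l₁ ++ B :: l₂).Pairwise (fun a b => b.card ≤ a.card))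
    (hA : A ∈ l₁ ++ B :: l₂) (hAB : A ⊆ B) : A ∈ B :: l₂ := by
  rcases List.mem_append.mp hA with hA₁ | hA₂
  · have hcard : B.card ≤ A.card :=
      (List.pairwise_append.mp hsorted).2.2 A hA₁ B List.mem_cons_self
    rw [Finset.eq_of_subset_of_card_le hAB hcard]
    exact List.mem_cons_self
  · exact hA₂

lemma exists_mem_sgbStep_mem_subset_center (clusters : List (Finset α × List (Finset α)))
    (s : Finset α) : ∃ c ∈ sgbStep clusters s, s ∈ c.2 ∧ s ⊆ c.1 := by
  unfold sgbStep
  split_ifs with h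
  · obtain ⟨c, hc, hs⟩ := List.any_eq_true.mp h
    rw [decide_eq_true_eq] at hs
    exact ⟨_, List.mem_map_of_mem hc, by simp [hs]⟩
  · exact ⟨(s, [s]), List.mem_append_right _ (List.mem_singleton_self _),
      List.mem_singleton_self _, subset_rfl⟩

lemma exists_mem_sgbStep_center_eq (clusters : List (Finset α × List (Finset α)))
    (s : Finset α) {c : Finset α × List (Finset α)} (hc : c ∈ clusters) :
    ∃ c' ∈ sgbStep clusters s, c'.1 = c.1 ∧ c.2 ⊆ c'.2 ∧ (s ⊆ c.1 → s ∈ c'.2) := by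
  unfold sgbStep
  split_ifs with h
  · refine ⟨_, List.mem_map_of_mem hc, ?_⟩
    by_cases hs : s ⊆ c.1 <;> simp [hs]
  · have hs : ¬ s ⊆ c.1 := fun hs => h (List.any_eq_true.mpr ⟨c, hc, decide_eq_true hs⟩)
    exact ⟨c, List.mem_append_left _ hc, rfl, List.Subset.refl _, fun h' => absurd h' hs⟩

lemma exists_mem_foldl_sgbStep_center_eq (L : List (Finset α))
    {clusters : List (Finset α × List (Finset α))} {c : Finset α × List (Finset α)}
    (hc : c ∈ clusters) :
    ∃ c' ∈ L.foldl sgbStep clusters,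
      c'.1 = c.1 ∧ c.2 ⊆ c'.2 ∧ ∀ y ∈ L, y ⊆ c.1 → y ∈ c'.2 := by
  induction L generalizing clusters c with
  | nil => exact ⟨c, hc, rfl, List.Subset.refl _, by simp⟩
  | cons s L ih =>
    obtain ⟨c₁, hc₁, hcenter₁, hsub₁, hs⟩ := exists_mem_sgbStep_center_eq clusters s hc
    obtain ⟨c', hc', hcenter, hsub, hL⟩ := ih hc₁
    refine ⟨c', hc', hcenter.trans hcenter₁, List.Subset.trans hsub₁ hsub, ?_⟩
    rintro y (_ | ⟨_, hy⟩) hyc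
    · exact hsub (hs hyc)
    · exact hL y hy (hcenter₁ ▸ hyc)

/-- **SGB misses no containment edge**: if the schemas are processed in non-increasing
order of cardinality, then for every `A, B` in the list with `A ⊆ B`, the resulting
graph contains the edge `B → A`. -/
theorem sgb_no_missing_edges (S : List (Finset α))
    (hsorted : S.Pairwise (fun a b => b.card ≤ a.card))
    (A B : Finset α) (hA : A ∈ S) (hB : B ∈ S) (hAB : A ⊆ B) :
    sgbEdge S B A := by
  obtain ⟨l₁, l₂, rfl⟩ := List.append_of_mem hB
  have hA' : A = B ∨ A ∈ l₂ :=
    List.mem_cons.mp (List.mem_cons_of_subset_of_pairwise_card_ge hsorted hA hAB)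
  obtain ⟨c, hc, hBc, hBC⟩ := exists_mem_sgbStep_mem_subset_center (l₁.foldl sgbStep []) B
  obtain ⟨c', hc', -, hsub, hlater⟩ := exists_mem_foldl_sgbStep_center_eq l₂ hc
  refine ⟨c', by simpa [sgbClusters, List.foldl_append] using hc', hsub hBc, ?_, hAB⟩
  rcases hA' with rfl | hA'
  · exact hsub hBc
  · exact hlater A hA' (hAB.trans hBC)
end

section
/- In the SGB clustering algorithm, every processed set is a member of at least one cluster, and every cluster center contains (as supersets) all members of its cluster. -/
/-! Both properties are invariants of a single SGB step, which never removes a member and adds a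
set only to clusters whose centers contain it; and each set is a member right after the step
that processes it. -/

variable {α : Type*} [DecidableEq α]

def MembersSubsetCenters (clusters : List (Finset α × List (Finset α))) : Prop :=
  ∀ c ∈ clusters, ∀ m ∈ c.2, m ⊆ c.1

def IsClustered (clusters : List (Finset α × List (Finset α))) (m : Finset α) : Prop :=
  ∃ c ∈ clusters, m ∈ c.2

section sgbStep

variable {clusters : List (Finset α × List (Finset α))} {s m : Finset α}

theorem membersSubsetCenters_sgbStep (h : MembersSubsetCenters clusters) :
    MembersSubsetCenters (sgbStep clusters s) := by
  unfold sgbStep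
  split
  · simp only [MembersSubsetCenters, List.mem_map]
    rintro _ ⟨c, hc, rfl⟩ m hm
    split_ifs at hm ⊢ with hsub
    · rcases List.mem_cons.1 hm with rfl | hm
      exacts [hsub, h c hc m hm]
    · exact h c hc m hm
  · simp only [MembersSubsetCenters, List.mem_append, List.mem_singleton]
    rintro c (hc | rfl) m hm
    · exact h c hc m hm
    · rw [List.mem_singleton.1 hm]

theorem isClustered_sgbStep (h : IsClustered clusters m) :
    IsClustered (sgbStep clusters s) m := by
  obtain ⟨c, hc, hm⟩ := h
  unfold sgbStep
  split
  · by_cases hsub : s ⊆ c.1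
    · exact ⟨(c.1, s :: c.2), List.mem_map.2 ⟨c, hc, by simp [hsub]⟩, by simp [hm]⟩
    · exact ⟨c, List.mem_map.2 ⟨c, hc, by simp [hsub]⟩, hm⟩
  · exact ⟨c, List.mem_append_left _ hc, hm⟩

theorem isClustered_sgbStep_self (clusters : List (Finset α × List (Finset α))) (s : Finset α) :
    IsClustered (sgbStep clusters s) s := by
  unfold sgbStep
  split
  · next h =>
    obtain ⟨c, hc, hsub⟩ := by simpa only [List.any_eq_true, decide_eq_true_eq] using h
    exact ⟨(c.1, s :: c.2), List.mem_map.2 ⟨c, hc, by simp [hsub]⟩, List.mem_cons_self⟩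
  · exact ⟨(s, [s]), by simp, List.mem_singleton_self s⟩

end sgbStep

section foldl

variable (S : List (Finset α)) {clusters : List (Finset α × List (Finset α))}

theorem membersSubsetCenters_foldl_sgbStep (h : MembersSubsetCenters clusters) :
    MembersSubsetCenters (S.foldl sgbStep clusters) := by
  induction S generalizing clusters with
  | nil => exact h
  | cons s S ih => exact ih (membersSubsetCenters_sgbStep h)

theorem isClustered_foldl_sgbStep {m : Finset α} (h : IsClustered clusters m) :
    IsClustered (S.foldl sgbStep clusters) m := by
  induction S generalizing clusters with
  | nil => exact h
  | cons s S ih => exact ih (isClustered_sgbStep h)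

theorem isClustered_foldl_sgbStep_of_mem {s : Finset α} (hs : s ∈ S) :
    IsClustered (S.foldl sgbStep clusters) s := by
  obtain ⟨before, after, rfl⟩ := List.append_of_mem hs
  rw [List.foldl_append, List.foldl_cons]
  exact isClustered_foldl_sgbStep after (isClustered_sgbStep_self _ s)

end foldl

theorem sgb_membership_and_centers_general (S : List (Finset α)) :
    (∀ s ∈ S, ∃ c ∈ sgbClusters S, s ∈ c.2) ∧
    (∀ c ∈ sgbClusters S, ∀ m ∈ c.2, m ⊆ c.1) :=
  ⟨fun _ hs => isClustered_foldl_sgbStep_of_mem S hs,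
    membersSubsetCenters_foldl_sgbStep S (by simp [MembersSubsetCenters])⟩

/-- **SGB clustering invariants**: every processed set is a member of at least one
cluster, and every cluster center contains (as a superset) each member of its cluster. -/
theorem sgb_membership_and_centers (S : List (Finset α))
    (hsorted : S.Pairwise (fun a b => b.card ≤ a.card)) :
    (∀ s ∈ S, ∃ c ∈ sgbClusters S, s ∈ c.2) ∧
    (∀ c ∈ sgbClusters S, ∀ m ∈ c.2, m ⊆ c.1) :=
  sgb_membership_and_centers_general S
end
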